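/- Let P1 be a SPARQL graph pattern, P2 a BGP, and σ : V → V an injective renaming with σ(x) = x for all x ∈ sv(P1) ∩ var(P2) and σ(x) ∉ sv(P1) ∪ var(P2) for all x ∈ var(P2) \ sv(P1). Then for every RDF graph G, ⟦MINUS(P1, P2σ)⟧_G = ⟦MINUS(P1,P2)⟧_G, where P2σ is the BGP obtained from P2 by replacing every variable x by σ(x). That is, relabeling by fresh variables the variables of the MINUS argument that are not shared with the scope of the outer pattern does not change the evaluation. -/
import Mathlib


/-!
Formalization of SPARQL graph-pattern syntax and semantics, following
Pérez et al. and the paper "SPARQL in N3".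

* IRIs, blank nodes and literals are three pairwise disjoint infinite sets,
  packaged in the type `RTerm` (the set `T = I ∪ B ∪ L`).
* Variables form a further disjoint infinite set `Var`.
* A pattern term (`PTerm`) is an element of `T ∪ V`.
* A solution mapping is a partial function from variables to RDF terms,
  modeled as `Var → Option RTerm`.
-/

namespace SparqlN3

/-- RDF terms: IRIs, blank nodes, literals — three disjoint infinite sets. -/
inductive RTerm : Type
  | iri : ℕ → RTerm
  | bnode : ℕ → RTerm
  | lit : ℕ → RTerm
deriving DecidableEq

/-- Variables (an infinite set, disjoint from `RTerm` by typing). -/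
abbrev Var : Type := ℕ

/-- Elements of `T ∪ V`. -/
abbrev PTerm : Type := RTerm ⊕ Var

/-- Triple patterns: elements of `(T ∪ V) × (T ∪ V) × (T ∪ V)`. -/
abbrev TriplePat : Type := PTerm × PTerm × PTerm

/-- Ground RDF triples. -/
abbrev Triple : Type := RTerm × RTerm × RTerm

/-- An RDF graph: a set of triples. -/
abbrev Graph : Type := Set Triple

/-- A basic graph pattern: a finite set of triple patterns. -/
abbrev BGP : Type := Finset TriplePat

/-- A (partial) mapping from variables to RDF terms. -/
abbrev Mapping : Type := Var → Option RTerm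

/-- The domain of a mapping. -/
def mdom (μ : Mapping) : Set Var := {x | μ x ≠ none}

/-- A solution mapping has a finite domain. -/
def FiniteDom (μ : Mapping) : Prop := (mdom μ).Finite

/-- Compatibility of two mappings: they agree on the common domain. -/
def compat (μ₁ μ₂ : Mapping) : Prop :=
  ∀ x a b, μ₁ x = some a → μ₂ x = some b → a = b

/-- Union `μ₁ ∪ μ₂` of two (compatible) mappings. -/
def munion (μ₁ μ₂ : Mapping) : Mapping :=
  fun x => (μ₁ x).elim (μ₂ x) some

def varsPT : PTerm → Finset Var
  | .inl _ => ∅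
  | .inr v => {v}

/-- Variables of a triple pattern. -/
def varsTP (t : TriplePat) : Finset Var :=
  varsPT t.1 ∪ varsPT t.2.1 ∪ varsPT t.2.2

/-- Variables of a BGP. -/
def varsBGP (P : BGP) : Finset Var := P.biUnion varsTP

/-- Substitution on a pattern term: replace variables in the domain of `μ`. -/
def substPT (μ : Mapping) : PTerm → PTerm
  | .inl t => .inl t
  | .inr v => (μ v).elim (.inr v) .inl

/-- Substitution `tμ` on a triple pattern (componentwise). -/
def substTP (μ : Mapping) (t : TriplePat) : TriplePat :=
  (substPT μ t.1, substPT μ t.2.1, substPT μ t.2.2)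

/-- Substitution `Pμ` on a BGP (literal replacement of variables in `dom μ`). -/
def substBGP (μ : Mapping) (P : BGP) : BGP := P.image (substTP μ)

/-- View a ground triple as a triple pattern. -/
def toPat (t : Triple) : TriplePat := (.inl t.1, .inl t.2.1, .inl t.2.2)

/-- `InstIn G μ P` : the instantiation `Pμ` is contained in `G`
(every triple pattern of `P` becomes, under `μ`, a ground triple of `G`). -/
def InstIn (G : Graph) (μ : Mapping) (P : BGP) : Prop :=
  ∀ tp ∈ P, ∃ t ∈ G, substTP μ tp = toPat t

/-- Evaluation of a BGP: `⟦P⟧_G = {μ | dom(μ) = var(P) ∧ Pμ ⊆ G}`. -/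
def bgpEval (G : Graph) (P : BGP) : Set Mapping :=
  {μ | mdom μ = ↑(varsBGP P) ∧ InstIn G μ P}

/-- SPARQL graph patterns.  Filter conditions are modeled as predicates
on solution mappings. -/
inductive GP : Type
  | bgp : BGP → GP
  | and : GP → GP → GP
  | union : GP → GP → GP
  | minus : GP → GP → GP
  | fe : GP → GP → GP
  | fne : GP → GP → GP
  | filter : GP → (Mapping → Prop) → GP
  | opt : GP → GP → (Mapping → Prop) → GP

/-- Substitution `Pμ` on a graph pattern, applied componentwise to triple
patterns and recursively through the constructors; for filters, the
predicate is composed with `μ`. -/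
def substGP (μ : Mapping) : GP → GP
  | .bgp P => .bgp (substBGP μ P)
  | .and P₁ P₂ => .and (substGP μ P₁) (substGP μ P₂)
  | .union P₁ P₂ => .union (substGP μ P₁) (substGP μ P₂)
  | .minus P₁ P₂ => .minus (substGP μ P₁) (substGP μ P₂)
  | .fe P₁ P₂ => .fe (substGP μ P₁) (substGP μ P₂)
  | .fne P₁ P₂ => .fne (substGP μ P₁) (substGP μ P₂)
  | .filter P R => .filter (substGP μ P) (fun ν => R (munion μ ν))
  | .opt P₁ P₂ R => .opt (substGP μ P₁) (substGP μ P₂) (fun ν => R (munion μ ν))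

/-- Structural depth (used as termination measure for `eval`). -/
def depth : GP → ℕ
  | .bgp _ => 0
  | .and P₁ P₂ => max (depth P₁) (depth P₂) + 1
  | .union P₁ P₂ => max (depth P₁) (depth P₂) + 1
  | .minus P₁ P₂ => max (depth P₁) (depth P₂) + 1
  | .fe P₁ P₂ => max (depth P₁) (depth P₂) + 1
  | .fne P₁ P₂ => max (depth P₁) (depth P₂) + 1
  | .filter P _ => depth P + 1
  | .opt P₁ P₂ _ => max (depth P₁) (depth P₂) + 1

theorem depth_substGP (μ : Mapping) (P : GP) : depth (substGP μ P) = depth P := by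
  induction P <;> simp [substGP, depth, *]

/-- The scope `sv` of a graph pattern. -/
def sv : GP → Finset Var
  | .bgp P => varsBGP P
  | .and P₁ P₂ => sv P₁ ∪ sv P₂
  | .union P₁ P₂ => sv P₁ ∪ sv P₂
  | .minus P₁ _ => sv P₁
  | .fe P₁ _ => sv P₁
  | .fne P₁ _ => sv P₁
  | .filter P _ => sv P
  | .opt P₁ P₂ _ => sv P₁ ∪ sv P₂

/-- The variables `var(P)` occurring in a graph pattern. -/
def varsGP : GP → Finset Var
  | .bgp P => varsBGP P
  | .and P₁ P₂ => varsGP P₁ ∪ varsGP P₂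
  | .union P₁ P₂ => varsGP P₁ ∪ varsGP P₂
  | .minus P₁ P₂ => varsGP P₁ ∪ varsGP P₂
  | .fe P₁ P₂ => varsGP P₁ ∪ varsGP P₂
  | .fne P₁ P₂ => varsGP P₁ ∪ varsGP P₂
  | .filter P _ => varsGP P
  | .opt P₁ P₂ _ => varsGP P₁ ∪ varsGP P₂

/-- Evaluation `⟦P⟧_G` of SPARQL graph patterns over an RDF graph `G`. -/
def eval (G : Graph) : GP → Set Mapping
  | .bgp P => bgpEval G P
  | .and P₁ P₂ =>
      {μ | ∃ μ₁ ∈ eval G P₁, ∃ μ₂ ∈ eval G P₂, compat μ₁ μ₂ ∧ μ = munion μ₁ μ₂}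
  | .union P₁ P₂ => eval G P₁ ∪ eval G P₂
  | .minus P₁ P₂ =>
      {μ ∈ eval G P₁ | ∀ μ' ∈ eval G P₂, ¬ compat μ μ' ∨ mdom μ ∩ mdom μ' = ∅}
  | .fe P₁ P₂ =>
      {μ ∈ eval G P₁ | (eval G (substGP μ P₂)).Nonempty}
  | .fne P₁ P₂ =>
      {μ ∈ eval G P₁ | eval G (substGP μ P₂) = ∅}
  | .filter P R => {μ ∈ eval G P | R μ}
  | .opt P₁ P₂ R =>
      {μ | ∃ μ₁ ∈ eval G P₁, ∃ μ₂ ∈ eval G P₂,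
          compat μ₁ μ₂ ∧ R (munion μ₁ μ₂) ∧ μ = munion μ₁ μ₂}
        ∪ {μ₁ ∈ eval G P₁ | ¬ ∃ μ₂ ∈ eval G P₂, compat μ₁ μ₂ ∧ R (munion μ₁ μ₂)}
termination_by P => depth P
decreasing_by all_goals (simp [depth_substGP, depth]; try omega)

/-- A pattern contains no UNION and no OPT subpattern. -/
def NoUnionOpt : GP → Prop
  | .bgp _ => True
  | .and P₁ P₂ => NoUnionOpt P₁ ∧ NoUnionOpt P₂
  | .union _ _ => False
  | .minus P₁ P₂ => NoUnionOpt P₁ ∧ NoUnionOpt P₂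
  | .fe P₁ P₂ => NoUnionOpt P₁ ∧ NoUnionOpt P₂
  | .fne P₁ P₂ => NoUnionOpt P₁ ∧ NoUnionOpt P₂
  | .filter P _ => NoUnionOpt P
  | .opt _ _ _ => False

/-- Renaming of variables in a pattern term. -/
def renamePT (σ : Var → Var) : PTerm → PTerm
  | .inl t => .inl t
  | .inr v => .inr (σ v)

/-- Renaming of variables in a triple pattern. -/
def renameTP (σ : Var → Var) (t : TriplePat) : TriplePat :=
  (renamePT σ t.1, renamePT σ t.2.1, renamePT σ t.2.2)

/-- Renaming `Qσ` of variables in a BGP. -/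
def renameBGP (σ : Var → Var) (P : BGP) : BGP := P.image (renameTP σ)

/-- Restriction of a mapping to a set of variables. -/
def restrict (μ : Mapping) (S : Finset Var) : Mapping :=
  fun x => if x ∈ S then μ x else none


lemma mdom_munion (μ₁ μ₂ : Mapping) : mdom (munion μ₁ μ₂) = mdom μ₁ ∪ mdom μ₂ := by
  ext x
  simp only [mdom, munion, Set.mem_setOf_eq, Set.mem_union]
  cases h : μ₁ x <;> simp [h]

lemma eval_dom (G : Graph) : ∀ P : GP, ∀ μ ∈ eval G P, mdom μ ⊆ ↑(sv P) := by
  intro P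
  induction P with
  | bgp P =>
      intro μ hμ
      simp only [eval, bgpEval, Set.mem_setOf_eq] at hμ
      exact hμ.1.subset
  | and P₁ P₂ ih₁ ih₂ =>
      intro μ hμ
      simp only [eval, Set.mem_setOf_eq] at hμ
      obtain ⟨μ₁, h₁, μ₂, h₂, _, rfl⟩ := hμ
      rw [mdom_munion]
      simp only [sv, Finset.coe_union]
      exact Set.union_subset_union (ih₁ μ₁ h₁) (ih₂ μ₂ h₂)
  | union P₁ P₂ ih₁ ih₂ =>
      intro μ hμ
      simp only [eval, Set.mem_union] at hμ
      simp only [sv, Finset.coe_union]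
      rcases hμ with h | h
      · exact (ih₁ μ h).trans Set.subset_union_left
      · exact (ih₂ μ h).trans Set.subset_union_right
  | minus P₁ P₂ ih₁ _ =>
      intro μ hμ
      simp only [eval, Set.mem_setOf_eq] at hμ
      exact ih₁ μ hμ.1
  | fe P₁ P₂ ih₁ _ =>
      intro μ hμ
      simp only [eval, Set.mem_setOf_eq] at hμ
      exact ih₁ μ hμ.1
  | fne P₁ P₂ ih₁ _ =>
      intro μ hμ
      simp only [eval, Set.mem_setOf_eq] at hμ
      exact ih₁ μ hμ.1
  | filter P R ih =>
      intro μ hμ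
      simp only [eval, Set.mem_setOf_eq] at hμ
      exact ih μ hμ.1
  | opt P₁ P₂ R ih₁ ih₂ =>
      intro μ hμ
      simp only [eval, Set.mem_union, Set.mem_setOf_eq] at hμ
      simp only [sv, Finset.coe_union]
      rcases hμ with ⟨μ₁, h₁, μ₂, h₂, _, _, rfl⟩ | ⟨h₁, _⟩
      · rw [mdom_munion]
        exact Set.union_subset_union (ih₁ μ₁ h₁) (ih₂ μ₂ h₂)
      · exact (ih₁ μ h₁).trans Set.subset_union_left

lemma varsPT_rename (σ : Var → Var) (p : PTerm) :
    varsPT (renamePT σ p) = (varsPT p).image σ := by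
  cases p <;> simp [varsPT, renamePT]

lemma varsTP_rename (σ : Var → Var) (t : TriplePat) :
    varsTP (renameTP σ t) = (varsTP t).image σ := by
  simp [varsTP, renameTP, varsPT_rename, Finset.image_union]

lemma varsBGP_rename (σ : Var → Var) (P : BGP) :
    varsBGP (renameBGP σ P) = (varsBGP P).image σ := by
  classical
  simp only [varsBGP, renameBGP, Finset.biUnion_image, Finset.image_biUnion]
  exact Finset.biUnion_congr rfl fun t _ => varsTP_rename σ t

lemma substPT_rename {μ' ν : Mapping} {σ : Var → Var} {p : PTerm}
    (h : ∀ v ∈ varsPT p, μ' v = ν (σ v)) (r : RTerm) :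
    substPT μ' p = .inl r ↔ substPT ν (renamePT σ p) = .inl r := by
  cases p with
  | inl t => rfl
  | inr v =>
      have hv := h v (by simp [varsPT])
      simp only [substPT, renamePT, hv]
      cases ν (σ v) <;> simp

lemma substTP_rename {μ' ν : Mapping} {σ : Var → Var} {tp : TriplePat}
    (h : ∀ v ∈ varsTP tp, μ' v = ν (σ v)) (t : Triple) :
    substTP μ' tp = toPat t ↔ substTP ν (renameTP σ tp) = toPat t := by
  obtain ⟨p₁, p₂, p₃⟩ := tp
  have h₁ : ∀ v ∈ varsPT p₁, μ' v = ν (σ v) := fun v hv =>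
    h v (by simp [varsTP, hv])
  have h₂ : ∀ v ∈ varsPT p₂, μ' v = ν (σ v) := fun v hv =>
    h v (by simp [varsTP, hv])
  have h₃ : ∀ v ∈ varsPT p₃, μ' v = ν (σ v) := fun v hv =>
    h v (by simp [varsTP, hv])
  simp only [substTP, renameTP, toPat, Prod.ext_iff]
  exact and_congr (substPT_rename h₁ t.1)
    (and_congr (substPT_rename h₂ t.2.1) (substPT_rename h₃ t.2.2))

lemma instIn_rename {G : Graph} {μ' ν : Mapping} {σ : Var → Var} {P₂ : BGP}
    (h : ∀ v ∈ varsBGP P₂, μ' v = ν (σ v)) :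
    InstIn G μ' P₂ ↔ InstIn G ν (renameBGP σ P₂) := by
  classical
  constructor
  · intro H tp' htp'
    obtain ⟨tp, htp, rfl⟩ := Finset.mem_image.1 htp'
    obtain ⟨t, htG, he⟩ := H tp htp
    exact ⟨t, htG,
      (substTP_rename (fun v hv => h v (Finset.mem_biUnion.2 ⟨tp, htp, hv⟩)) t).1 he⟩
  · intro H tp htp
    obtain ⟨t, htG, he⟩ := H (renameTP σ tp) (Finset.mem_image_of_mem _ htp)
    exact ⟨t, htG,
      (substTP_rename (fun v hv => h v (Finset.mem_biUnion.2 ⟨tp, htp, hv⟩)) t).2 he⟩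

/-- Key pointwise lemma: on the domain of `μ`, the renamed and original
candidate mappings agree. -/
lemma agree_on_mdom {P₁ : GP} {P₂ : BGP} {σ : Var → Var} {μ μ' ν : Mapping}
    (hfix : ∀ x ∈ sv P₁ ∩ varsBGP P₂, σ x = x)
    (hfresh : ∀ x ∈ varsBGP P₂, x ∉ sv P₁ → σ x ∉ sv P₁ ∪ varsBGP P₂)
    (hdom : mdom μ ⊆ ↑(sv P₁))
    (hμ' : mdom μ' = ↑(varsBGP P₂))
    (hν : mdom ν = ↑((varsBGP P₂).image σ))
    (hcorr : ∀ v ∈ varsBGP P₂, μ' v = ν (σ v)) :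
    ∀ x ∈ mdom μ, ν x = μ' x := by
  intro x hx
  have hxP₁ : x ∈ sv P₁ := hdom hx
  by_cases hxν : x ∈ mdom ν
  · rw [hν] at hxν
    obtain ⟨y, hy, rfl⟩ := Finset.mem_coe.1 hxν |> Finset.mem_image.1
    by_cases hyP₁ : y ∈ sv P₁
    · have : σ y = y := hfix y (Finset.mem_inter.2 ⟨hyP₁, hy⟩)
      rw [this, hcorr y hy, this]
    · exact absurd (Finset.mem_union_left _ hxP₁) (hfresh y hy hyP₁)
  · have hxν' : ν x = none := by
      by_contra hc
      exact hxν hc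
    have hxμ' : μ' x = none := by
      by_contra hc
      have hxv : x ∈ varsBGP P₂ := by
        have : x ∈ mdom μ' := hc
        rw [hμ'] at this
        exact this
      have hfx : σ x = x := hfix x (Finset.mem_inter.2 ⟨hxP₁, hxv⟩)
      apply hxν
      rw [hν]
      exact Finset.mem_coe.2 (Finset.mem_image.2 ⟨x, hxv, hfx⟩)
    rw [hxν', hxμ']

lemma agree_compat {μ μ' ν : Mapping} (h : ∀ x ∈ mdom μ, ν x = μ' x) :
    compat μ ν ↔ compat μ μ' := by
  constructor <;> intro H x a b ha hb
  · refine H x a b ha ?_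
    rw [h x (by simp [mdom, ha])]
    exact hb
  · refine H x a b ha ?_
    rw [← h x (by simp [mdom, ha])]
    exact hb

lemma agree_dom {μ μ' ν : Mapping} (h : ∀ x ∈ mdom μ, ν x = μ' x) :
    mdom μ ∩ mdom ν = mdom μ ∩ mdom μ' := by
  ext x
  simp only [Set.mem_inter_iff, mdom, Set.mem_setOf_eq]
  constructor
  · rintro ⟨h₁, h₂⟩; exact ⟨h₁, by rw [← h x h₁]; exact h₂⟩
  · rintro ⟨h₁, h₂⟩; exact ⟨h₁, by rw [h x h₁]; exact h₂⟩

/-- Relabeling by fresh variables the variables of the MINUS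
argument that are not shared with the scope of the outer pattern does not
change the evaluation. -/
theorem minus_relabel (P₁ : GP) (P₂ : BGP) (σ : Var → Var)
    (hσ : Function.Injective σ)
    (hfix : ∀ x ∈ sv P₁ ∩ varsBGP P₂, σ x = x)
    (hfresh : ∀ x ∈ varsBGP P₂, x ∉ sv P₁ → σ x ∉ sv P₁ ∪ varsBGP P₂)
    (G : Graph) :
    eval G (.minus P₁ (.bgp (renameBGP σ P₂))) = eval G (.minus P₁ (.bgp P₂)) := by
  classical
  have e₁ : eval G (GP.minus P₁ (GP.bgp (renameBGP σ P₂))) =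
      {μ ∈ eval G P₁ | ∀ μ' ∈ bgpEval G (renameBGP σ P₂),
        ¬ compat μ μ' ∨ mdom μ ∩ mdom μ' = ∅} := by
    simp [eval]
  have e₂ : eval G (GP.minus P₁ (GP.bgp P₂)) =
      {μ ∈ eval G P₁ | ∀ μ' ∈ bgpEval G P₂,
        ¬ compat μ μ' ∨ mdom μ ∩ mdom μ' = ∅} := by
    simp [eval]
  rw [e₁, e₂]
  ext μ
  simp only [Set.mem_setOf_eq]
  constructor
  · rintro ⟨h₁, h₂⟩
    refine ⟨h₁, ?_⟩
    intro μ' hμ'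
    have hdom : mdom μ ⊆ ↑(sv P₁) := eval_dom G P₁ μ h₁
    obtain ⟨hμ'dom, hμ'inst⟩ := hμ'
    -- build ν from μ'
    set ν : Mapping := fun y =>
      if y ∈ (varsBGP P₂).image σ then μ' (Function.invFun σ y) else none with hνdef
    have hcorr : ∀ v ∈ varsBGP P₂, μ' v = ν (σ v) := by
      intro v hv
      simp only [hνdef, Finset.mem_image.2 ⟨v, hv, rfl⟩, if_pos,
        Function.leftInverse_invFun hσ v]
    have hνdom : mdom ν = ↑((varsBGP P₂).image σ) := by
      ext y
      simp only [mdom, Set.mem_setOf_eq, hνdef, Finset.coe_image, Set.mem_image,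
        Finset.mem_coe]
      constructor
      · intro hy
        by_cases hmem : y ∈ (varsBGP P₂).image σ
        · obtain ⟨v, hv, rfl⟩ := Finset.mem_image.1 hmem
          exact ⟨v, hv, rfl⟩
        · simp [hmem] at hy
      · rintro ⟨v, hv, rfl⟩
        rw [if_pos (Finset.mem_image.2 ⟨v, hv, rfl⟩), Function.leftInverse_invFun hσ v]
        have : v ∈ mdom μ' := by rw [hμ'dom]; exact hv
        exact this
    have hνmem : ν ∈ bgpEval G (renameBGP σ P₂) := by
      refine ⟨?_, (instIn_rename hcorr).1 hμ'inst⟩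
      rw [hνdom, varsBGP_rename]
    have hagree := agree_on_mdom hfix hfresh hdom hμ'dom hνdom hcorr
    rcases h₂ ν hνmem with hc | hd
    · exact Or.inl fun hcc => hc ((agree_compat hagree).2 hcc)
    · exact Or.inr (by rw [← agree_dom hagree]; exact hd)
  · rintro ⟨h₁, h₂⟩
    refine ⟨h₁, ?_⟩
    intro ν hν
    have hdom : mdom μ ⊆ ↑(sv P₁) := eval_dom G P₁ μ h₁
    obtain ⟨hνdom', hνinst⟩ := hν
    rw [varsBGP_rename] at hνdom'
    -- build μ' from ν
    set μ' : Mapping := fun x => if x ∈ varsBGP P₂ then ν (σ x) else none with hμ'def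
    have hcorr : ∀ v ∈ varsBGP P₂, μ' v = ν (σ v) := by
      intro v hv
      simp only [hμ'def, if_pos hv]
    have hμ'dom : mdom μ' = ↑(varsBGP P₂) := by
      ext x
      simp only [mdom, Set.mem_setOf_eq, hμ'def, Finset.mem_coe]
      constructor
      · intro hx
        by_cases hmem : x ∈ varsBGP P₂
        · exact hmem
        · simp [hmem] at hx
      · intro hx
        rw [if_pos hx]
        have : σ x ∈ mdom ν := by
          rw [hνdom']
          exact Finset.mem_coe.2 (Finset.mem_image_of_mem σ hx)
        exact this
    have hμ'mem : μ' ∈ bgpEval G P₂ :=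
      ⟨hμ'dom, (instIn_rename hcorr).2 hνinst⟩
    have hagree := agree_on_mdom hfix hfresh hdom hμ'dom hνdom' hcorr
    rcases h₂ μ' hμ'mem with hc | hd
    · exact Or.inl fun hcc => hc ((agree_compat hagree).1 hcc)
    · exact Or.inr (by rw [agree_dom hagree]; exact hd)

end SparqlN3
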